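/- arXiv:2403.11431 — 4 statements merged into one kernel-verified Lean document; each statement's English description precedes it below -/
import Mathlib

section
/- Let ρ be a positive semidefinite operator and h a Hermitian operator with h ⪰ 0 on a finite-dimensional Hilbert space, with tr(ρ e^{h}) > 0. Then tr[ρ (e^{h} − 1)] / tr[ρ e^{h}] ≤ (e^{‖h‖} − 1)/e^{‖h‖}. -/
open scoped Matrix.Norms.L2Operator ComplexOrder
open Matrix

lemma psd_trace_re_nonneg {N : ℕ} {M : Matrix (Fin N) (Fin N) ℂ}
    (hM : M.PosSemidef) : 0 ≤ M.trace.re := by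
  rw [Matrix.trace, Complex.re_sum]
  apply Finset.sum_nonneg
  intro i _
  have := hM.dotProduct_mulVec_nonneg (Pi.single i 1)
  have hdiag : star (Pi.single i 1) ⬝ᵥ M *ᵥ (Pi.single i 1 : Fin N → ℂ) = M i i := by
    simp [Matrix.mulVec_single, dotProduct, Pi.single_apply]
  rw [hdiag] at this
  exact (Complex.le_def.mp this).1

lemma psd_mul_trace_re_nonneg {N : ℕ} {A B : Matrix (Fin N) (Fin N) ℂ}
    (hA : A.PosSemidef) (hB : B.PosSemidef) : 0 ≤ (A * B).trace.re := by
  open scoped MatrixOrder in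
  obtain ⟨X, rfl⟩ := CStarAlgebra.nonneg_iff_eq_star_mul_self.mp hA.nonneg
  have key : (X * B * Xᴴ).trace = (star X * X * B).trace := by
    rw [Matrix.trace_mul_cycle, Matrix.star_eq_conjTranspose]
  rw [← key]
  exact psd_trace_re_nonneg (hB.mul_mul_conjTranspose_same X)

lemma eig_le_norm {N : ℕ} {h : Matrix (Fin N) (Fin N) ℂ}
    (hh : h.IsHermitian) (i : Fin N) : hh.eigenvalues i ≤ ‖h‖ := by
  haveI : Nonempty (Fin N) := ⟨i⟩
  have h1 : hh.eigenvalues i ∈ spectrum ℝ h := hh.eigenvalues_mem_spectrum_real i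
  have h2 : ((hh.eigenvalues i : ℝ) : ℂ) ∈ spectrum ℂ h := by
    have := spectrum.algebraMap_mem ℂ h1
    simpa using this
  have h3 : ‖((hh.eigenvalues i : ℝ) : ℂ)‖ ≤ ‖h‖ := spectrum.norm_le_norm_of_mem h2
  rw [Complex.norm_real] at h3
  exact (le_abs_self _).trans h3

lemma exp_le_smul_one {N : ℕ} {h : Matrix (Fin N) (Fin N) ℂ}
    (hh : h.PosSemidef) :
    ((Real.exp ‖h‖ : ℂ) • (1 : Matrix (Fin N) (Fin N) ℂ)
      - NormedSpace.exp h).PosSemidef := by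
  set U : Matrix (Fin N) (Fin N) ℂ := (hh.1.eigenvectorUnitary : Matrix (Fin N) (Fin N) ℂ)
    with hUdef
  have hU1 : U * star U = 1 := Matrix.mem_unitaryGroup_iff.mp hh.1.eigenvectorUnitary.2
  have hU2 : star U * U = 1 := Matrix.mem_unitaryGroup_iff'.mp hh.1.eigenvectorUnitary.2
  have hUunit : IsUnit U := ⟨⟨U, star U, hU1, hU2⟩, rfl⟩
  have hUinv : U⁻¹ = star U := Matrix.inv_eq_left_inv hU2
  have hspec : h = U * diagonal (RCLike.ofReal ∘ hh.1.eigenvalues) * U⁻¹ := by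
    rw [hUinv]; exact hh.1.spectral_theorem
  have hexp : NormedSpace.exp h
      = U * diagonal (fun i => Complex.exp (hh.1.eigenvalues i)) * star U := by
    have h1 : NormedSpace.exp (U * diagonal (RCLike.ofReal ∘ hh.1.eigenvalues) * U⁻¹)
        = U * NormedSpace.exp (diagonal (RCLike.ofReal ∘ hh.1.eigenvalues)) * U⁻¹ :=
      Matrix.exp_conj _ _ hUunit
    rw [← hspec] at h1
    rw [h1, hUinv, Matrix.exp_diagonal]
    congr 1
    congr 1
    rw [Pi.exp_def]
    funext i
    simp [Function.comp, ← Complex.exp_eq_exp_ℂ]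
  have hdiff : (Real.exp ‖h‖ : ℂ) • (1 : Matrix (Fin N) (Fin N) ℂ) - NormedSpace.exp h
      = U * diagonal (fun i => (Real.exp ‖h‖ : ℂ) - Complex.exp (hh.1.eigenvalues i)) * star U := by
    have hone : (Real.exp ‖h‖ : ℂ) • (1 : Matrix (Fin N) (Fin N) ℂ)
        = U * ((Real.exp ‖h‖ : ℂ) • (1 : Matrix (Fin N) (Fin N) ℂ)) * star U := by
      rw [Matrix.mul_smul, Matrix.smul_mul, mul_one, hU1]
    conv_lhs => rw [hone, hexp]
    rw [← Matrix.sub_mul, ← Matrix.mul_sub]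
    congr 2
    ext i j
    by_cases hij : i = j <;>
      simp [Matrix.diagonal_apply, Matrix.sub_apply, Matrix.smul_apply, Matrix.one_apply, hij]
  rw [hdiff]
  have hd : (Matrix.diagonal
      (fun i => (Real.exp ‖h‖ : ℂ) - Complex.exp (hh.1.eigenvalues i))).PosSemidef := by
    apply Matrix.PosSemidef.diagonal
    intro i
    show (0 : ℂ) ≤ (Real.exp ‖h‖ : ℂ) - Complex.exp (hh.1.eigenvalues i)
    have h1 : Real.exp (hh.1.eigenvalues i) ≤ Real.exp ‖h‖ :=
      Real.exp_le_exp.mpr (eig_le_norm hh.1 i)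
    have h2 : (Real.exp ‖h‖ : ℂ) - Complex.exp (hh.1.eigenvalues i)
        = ((Real.exp ‖h‖ - Real.exp (hh.1.eigenvalues i) : ℝ) : ℂ) := by
      push_cast [← Complex.ofReal_exp]
      ring
    rw [h2, Complex.zero_le_real]
    linarith
  have := hd.mul_mul_conjTranspose_same U
  simpa [Matrix.star_eq_conjTranspose] using this

/-- For `ρ ⪰ 0`, `h ⪰ 0` with `tr(ρ e^h) > 0`:
    `tr[ρ(e^h − 1)]/tr[ρ e^h] ≤ (e^{‖h‖} − 1)/e^{‖h‖}`. -/
theorem trace_ratio_bound {N : ℕ} (ρ h : Matrix (Fin N) (Fin N) ℂ)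
    (hρ : ρ.PosSemidef) (hh : h.PosSemidef)
    (hpos : 0 < ((ρ * NormedSpace.exp h).trace).re) :
    ((ρ * (NormedSpace.exp h - 1)).trace).re / ((ρ * NormedSpace.exp h).trace).re ≤
      (Real.exp ‖h‖ - 1) / Real.exp ‖h‖ := by
  set E := Real.exp ‖h‖ with hE
  have hEpos : 0 < E := Real.exp_pos _
  set A := ((ρ * NormedSpace.exp h).trace).re with hA
  set t := ρ.trace.re with ht
  -- numerator
  have hnum : ((ρ * (NormedSpace.exp h - 1)).trace).re = A - t := by
    rw [mul_sub, mul_one, Matrix.trace_sub, Complex.sub_re]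
  -- key inequality : A ≤ E * t
  have hkey : A ≤ E * t := by
    have hM := exp_le_smul_one hh
    have h0 : 0 ≤ (ρ * ((Real.exp ‖h‖ : ℂ) • (1 : Matrix (Fin N) (Fin N) ℂ)
        - NormedSpace.exp h)).trace.re := psd_mul_trace_re_nonneg hρ hM
    have hexpand : (ρ * ((Real.exp ‖h‖ : ℂ) • (1 : Matrix (Fin N) (Fin N) ℂ)
        - NormedSpace.exp h)).trace
        = (Real.exp ‖h‖ : ℂ) * ρ.trace - (ρ * NormedSpace.exp h).trace := by
      rw [mul_sub, Matrix.trace_sub, Matrix.mul_smul, mul_one, Matrix.trace_smul]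
      simp [smul_eq_mul]
    rw [hexpand, Complex.sub_re] at h0
    have : ((Real.exp ‖h‖ : ℂ) * ρ.trace).re = E * t := by
      rw [Complex.re_ofReal_mul]
    rw [this] at h0
    linarith
  have htpos : 0 < t := by
    by_contra hc
    push_neg at hc
    nlinarith [mul_nonpos_of_nonneg_of_nonpos hEpos.le hc]
  rw [hnum, div_le_div_iff₀ hpos hEpos]
  nlinarith
end

section
/- With f_β(t) = (2/(πβ)) · log((e^{π|t|/β} + 1)/(e^{π|t|/β} − 1)) for β > 0, the integral ∫_{−∞}^{∞} |t| f_β(t) dt equals 7ζ(3)β/π³, where ζ is the Riemann zeta function. -/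
open MeasureTheory
open Set


private lemma aux_int {r : ℝ} (hr : 0 < r) :
    IntegrableOn (fun t : ℝ => t * Real.exp (-(r * t))) (Ioi 0) := by
  have h := integrableOn_rpow_mul_exp_neg_mul_rpow (p := 1) (s := 1) (by norm_num) (by norm_num) hr
  refine h.congr_fun (fun t ht => ?_) measurableSet_Ioi
  simp only [Real.rpow_one, neg_mul]

private lemma aux_val {r : ℝ} (hr : 0 < r) :
    ∫ t in Ioi (0:ℝ), t * Real.exp (-(r * t)) = 1 / r ^ 2 := by
  have h := Real.integral_rpow_mul_exp_neg_mul_Ioi (a := 2) (by norm_num) hr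
  rw [show ∫ t in Ioi (0:ℝ), t * Real.exp (-(r * t))
      = ∫ t in Ioi (0:ℝ), t ^ ((2:ℝ) - 1) * Real.exp (-(r * t)) from
    setIntegral_congr_fun measurableSet_Ioi (fun t ht => by
      rw [show (2:ℝ) - 1 = 1 by norm_num, Real.rpow_one]), h, Real.Gamma_two, mul_one,
    show (2:ℝ) = ((2:ℕ):ℝ) by norm_num, Real.rpow_natCast]
  rw [one_div, inv_pow, one_div, inv_inj]

private lemma aux_summable_f : Summable (fun n : ℕ => 1 / ((n:ℝ) + 1) ^ 3) := by
  have h := (summable_nat_add_iff 1).mpr (Real.summable_one_div_nat_pow.mpr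
    (by norm_num : 1 < 3))
  refine h.congr fun n => ?_
  push_cast
  ring

private lemma aux_summable_odd : Summable (fun k : ℕ => 1 / (2 * (k:ℝ) + 1) ^ 3) := by
  have h := aux_summable_f.comp_injective (fun a b hab => by have : 2 * a = 2 * b := hab; omega : Function.Injective (2 * ·))
  refine h.congr fun k => ?_
  simp only [Function.comp]
  push_cast
  ring_nf

private lemma aux_odd :
    ∑' k : ℕ, 1 / (2 * (k:ℝ) + 1) ^ 3 = 7 / 8 * ∑' n : ℕ, 1 / ((n:ℝ) + 1) ^ 3 := by
  set f : ℕ → ℝ := fun n => 1 / ((n:ℝ) + 1) ^ 3 with hf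
  have hS := aux_summable_f
  have he : Summable (fun k => f (2 * k)) :=
    hS.comp_injective (fun a b hab => by have : 2 * a = 2 * b := hab; omega : Function.Injective (2 * ·))
  have ho : Summable (fun k => f (2 * k + 1)) :=
    hS.comp_injective (fun a b hab => by have : 2 * a + 1 = 2 * b + 1 := hab; omega : Function.Injective (2 * · + 1))
  have key := tsum_even_add_odd he ho
  have hodd : ∑' k, f (2 * k + 1) = 1 / 8 * ∑' n, f n := by
    rw [← tsum_mul_left]
    refine tsum_congr fun k => ?_
    simp only [hf]
    have hk : ((k:ℝ) + 1) ≠ 0 := by positivity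
    push_cast
    field_simp
    ring
  have heven : ∑' k, f (2 * k) = ∑' k : ℕ, 1 / (2 * (k:ℝ) + 1) ^ 3 := by
    refine tsum_congr fun k => ?_
    simp only [hf]
    push_cast
    ring_nf
  rw [heven, hodd] at key
  linarith [key]

private lemma aux_hasSum {u : ℝ} (hu : 0 < u) :
    HasSum (fun k : ℕ => 2 * (1 / (2 * (k:ℝ) + 1)) * Real.exp (-((2 * (k:ℝ) + 1) * u)))
      (Real.log ((Real.exp u + 1) / (Real.exp u - 1))) := by
  have hx : |Real.exp (-u)| < 1 := by
    rw [abs_of_pos (Real.exp_pos _)]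
    calc Real.exp (-u) < Real.exp 0 := Real.exp_lt_exp.mpr (by linarith)
    _ = 1 := Real.exp_zero
  have h := Real.hasSum_log_sub_log_of_abs_lt_one hx
  have hlt : Real.exp (-u) < 1 := lt_of_abs_lt hx
  have hpos : (0:ℝ) < Real.exp (-u) := Real.exp_pos _
  have h1 : (0:ℝ) < 1 + Real.exp (-u) := by linarith
  have h2 : (0:ℝ) < 1 - Real.exp (-u) := by linarith
  have hE : (0:ℝ) < Real.exp u - 1 := by
    have : Real.exp 0 < Real.exp u := Real.exp_lt_exp.mpr hu
    rw [Real.exp_zero] at this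
    linarith
  have hsum : Real.log (1 + Real.exp (-u)) - Real.log (1 - Real.exp (-u))
      = Real.log ((Real.exp u + 1) / (Real.exp u - 1)) := by
    rw [← Real.log_div h1.ne' h2.ne']
    congr 1
    rw [div_eq_div_iff h2.ne' hE.ne', Real.exp_neg]
    have h3 : Real.exp u ≠ 0 := (Real.exp_pos u).ne'
    field_simp
  have hfun : (fun n : ℕ => 2 * (1 / (2 * (n:ℝ) + 1)) * Real.exp (-u) ^ (2 * n + 1))
      = fun k : ℕ => 2 * (1 / (2 * (k:ℝ) + 1)) * Real.exp (-((2 * (k:ℝ) + 1) * u)) := by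
    funext k
    rw [← Real.exp_nat_mul]
    congr 1
    push_cast
    ring
  rw [hsum, hfun] at h
  exact h


/-- `∫_{−∞}^{∞} |t| f_β(t) dt = 7ζ(3)β/π³` with
    `f_β(t) = (2/(πβ))·log((e^{π|t|/β}+1)/(e^{π|t|/β}−1))`. -/
theorem integral_abs_mul_f_beta (β : ℝ) (hβ : 0 < β) :
    Integrable (fun t : ℝ => |t| * (2 / (Real.pi * β) *
        Real.log ((Real.exp (Real.pi * |t| / β) + 1) / (Real.exp (Real.pi * |t| / β) - 1)))) ∧
    ∫ t : ℝ, |t| * (2 / (Real.pi * β) *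
        Real.log ((Real.exp (Real.pi * |t| / β) + 1) / (Real.exp (Real.pi * |t| / β) - 1))) =
      7 * (∑' n : ℕ, 1 / ((n : ℝ) + 1) ^ 3) * β / Real.pi ^ 3 := by
  have hπ := Real.pi_pos
  set a : ℝ := Real.pi / β with ha
  have ha0 : 0 < a := div_pos hπ hβ
  set c : ℝ := 2 / (Real.pi * β) with hc
  have hc0 : 0 < c := by positivity
  set g : ℝ → ℝ := fun t => t * c *
    Real.log ((Real.exp (a * t) + 1) / (Real.exp (a * t) - 1)) with hg
  set F : ℕ → ℝ → ℝ := fun k t =>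
    (c * (2 * (1 / (2 * (k:ℝ) + 1)))) * (t * Real.exp (-(((2 * (k:ℝ) + 1) * a) * t))) with hF
  have hr : ∀ k : ℕ, (0:ℝ) < (2 * (k:ℝ) + 1) * a := fun k => by positivity
  -- pointwise expansion
  have hFg : ∀ t ∈ Ioi (0:ℝ), HasSum (fun k => F k t) (g t) := by
    intro t ht
    have ht0 : (0:ℝ) < t := ht
    have h := (aux_hasSum (mul_pos ha0 ht0)).mul_left (t * c)
    have hfun : (fun k : ℕ => t * c *
        (2 * (1 / (2 * (k:ℝ) + 1)) * Real.exp (-((2 * (k:ℝ) + 1) * (a * t)))))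
        = fun k => F k t := by
      funext k
      simp only [hF]
      rw [show ((2 * (k:ℝ) + 1) * a) * t = (2 * (k:ℝ) + 1) * (a * t) by ring]
      ring
    rw [hfun] at h
    exact h
  have hFint : ∀ k : ℕ, IntegrableOn (F k) (Ioi 0) := fun k =>
    (aux_int (hr k)).const_mul _
  have hFval : ∀ k : ℕ, ∫ t in Ioi (0:ℝ), F k t
      = (2 * c / a ^ 2) * (1 / (2 * (k:ℝ) + 1) ^ 3) := by
    intro k
    simp only [hF]
    rw [integral_const_mul, aux_val (hr k)]
    have hk : (0:ℝ) < 2 * (k:ℝ) + 1 := by positivity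
    field_simp
  have hFnonneg : ∀ k : ℕ, ∀ t ∈ Ioi (0:ℝ), 0 ≤ F k t := by
    intro k t ht
    have ht0 : (0:ℝ) < t := ht
    have hk : (0:ℝ) < 2 * (k:ℝ) + 1 := by positivity
    have := Real.exp_pos (-(((2 * (k:ℝ) + 1) * a) * t))
    simp only [hF]
    positivity
  have hFnorm : ∀ k : ℕ, ∫ t in Ioi (0:ℝ), ‖F k t‖
      = (2 * c / a ^ 2) * (1 / (2 * (k:ℝ) + 1) ^ 3) := by
    intro k
    rw [← hFval k]
    exact setIntegral_congr_fun measurableSet_Ioi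
      (fun t ht => Real.norm_of_nonneg (hFnonneg k t ht))
  have hsum : Summable (fun k : ℕ => ∫ t in Ioi (0:ℝ), ‖F k t‖) := by
    refine (aux_summable_odd.mul_left (2 * c / a ^ 2)).congr fun k => ?_
    rw [hFnorm k]
  -- value of the integral on Ioi 0
  have hkey := integral_tsum_of_summable_integral_norm hFint hsum
  have hIoi : ∫ t in Ioi (0:ℝ), g t
      = (2 * c / a ^ 2) * (7 / 8 * ∑' n : ℕ, 1 / ((n:ℝ) + 1) ^ 3) := by
    have e1 : ∫ t in Ioi (0:ℝ), g t = ∫ t in Ioi (0:ℝ), ∑' k, F k t :=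
      setIntegral_congr_fun measurableSet_Ioi (fun t ht => ((hFg t ht).tsum_eq).symm)
    rw [e1, ← hkey]
    rw [tsum_congr hFval, tsum_mul_left, aux_odd]
  -- integrability on Ioi 0
  have hgnonneg : ∀ t ∈ Ioi (0:ℝ), 0 ≤ g t := fun t ht =>
    ((hFg t ht).nonneg fun k => hFnonneg k t ht)
  have hmeas : AEStronglyMeasurable g (volume.restrict (Ioi 0)) := by
    have hden : ∀ t ∈ Ioi (0:ℝ), Real.exp (a * t) - 1 ≠ 0 := by
      intro t ht
      have ht0 : (0:ℝ) < t := ht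
      have : Real.exp 0 < Real.exp (a * t) := Real.exp_lt_exp.mpr (by positivity)
      rw [Real.exp_zero] at this
      linarith
    have hcont : ContinuousOn g (Ioi 0) := by
      refine ((continuous_id.mul continuous_const).continuousOn).mul ?_
      refine ContinuousOn.log ?_ ?_
      · exact ((Real.continuous_exp.comp (continuous_const.mul continuous_id)).add
          continuous_const).continuousOn.div
          (((Real.continuous_exp.comp (continuous_const.mul continuous_id)).sub
            continuous_const).continuousOn) hden
      · intro t ht
        have ht0 : (0:ℝ) < t := ht
        have h1 : (0:ℝ) < Real.exp (a * t) - 1 := by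
          have : Real.exp 0 < Real.exp (a * t) := Real.exp_lt_exp.mpr (by positivity)
          rw [Real.exp_zero] at this; linarith
        exact ne_of_gt (div_pos (by positivity) h1)
    exact hcont.aestronglyMeasurable measurableSet_Ioi
  have hIg : IntegrableOn g (Ioi 0) := by
    refine ⟨hmeas, ?_⟩
    have hae : 0 ≤ᵐ[volume.restrict (Ioi (0:ℝ))] g := by
      filter_upwards [ae_restrict_mem measurableSet_Ioi] with t ht
      exact hgnonneg t ht
    rw [hasFiniteIntegral_iff_ofReal hae]
    have e2 : ∫⁻ t in Ioi (0:ℝ), ENNReal.ofReal (g t)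
        = ∫⁻ t in Ioi (0:ℝ), ∑' k, ENNReal.ofReal (F k t) := by
      refine setLIntegral_congr_fun measurableSet_Ioi ?_
      intro t ht
      show ENNReal.ofReal (g t) = ∑' k, ENNReal.ofReal (F k t)
      rw [← (hFg t ht).tsum_eq, ENNReal.ofReal_tsum_of_nonneg (fun k => hFnonneg k t ht)
        (hFg t ht).summable]
    rw [e2, lintegral_tsum (fun k => ((hFint k).aestronglyMeasurable.aemeasurable).ennreal_ofReal)]
    have e3 : ∀ k : ℕ, ∫⁻ t in Ioi (0:ℝ), ENNReal.ofReal (F k t)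
        = ENNReal.ofReal ((2 * c / a ^ 2) * (1 / (2 * (k:ℝ) + 1) ^ 3)) := by
      intro k
      rw [← ofReal_integral_eq_lintegral_ofReal (hFint k) ?_, hFval k]
      filter_upwards [ae_restrict_mem measurableSet_Ioi] with t ht
      exact hFnonneg k t ht
    rw [tsum_congr e3, ← ENNReal.ofReal_tsum_of_nonneg
      (fun k => by positivity) (aux_summable_odd.mul_left _)]
    exact ENNReal.ofReal_lt_top
  -- extend to all of ℝ
  have h1 : IntegrableOn (fun t : ℝ => g |t|) (Ioi 0) := by
    refine hIg.congr_fun (fun t ht => ?_) measurableSet_Ioi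
    rw [abs_of_pos ht]
  have h2 : IntegrableOn (fun t : ℝ => g |t|) (Iio 0) := by
    have h := ((Measure.measurePreserving_neg (volume : Measure ℝ)).integrableOn_comp_preimage
      (Homeomorph.neg ℝ).measurableEmbedding).2 h1
    have heq : ((fun t : ℝ => g |t|) ∘ (Neg.neg)) = fun t : ℝ => g |t| := by
      funext t; simp [abs_neg]
    rw [heq, show (Neg.neg ⁻¹' (Ioi (0:ℝ)) : Set ℝ) = Iio 0 from by ext t; simp] at h
    exact h
  have hIabs : Integrable (fun t : ℝ => g |t|) := by
    rw [← integrableOn_univ, ← Iio_union_Ici (a := (0:ℝ)), integrableOn_union,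
      integrableOn_Ici_iff_integrableOn_Ioi]
    exact ⟨h2, h1⟩
  have hfun : (fun t : ℝ => |t| * (c *
      Real.log ((Real.exp (Real.pi * |t| / β) + 1) / (Real.exp (Real.pi * |t| / β) - 1))))
      = fun t : ℝ => g |t| := by
    funext t
    simp only [hg]
    rw [show Real.pi * |t| / β = a * |t| from by rw [ha]; ring]
    ring
  constructor
  · rw [hfun]
    exact hIabs
  · rw [hfun, integral_comp_abs (f := g), hIoi, hc, ha]
    field_simp
    ring
end

section
/- The integral ∫_0^∞ x · e^{x/2} · log((e^x + 1)/(e^x − 1)) dx converges and is at most 9. -/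
open MeasureTheory

/-- antiderivative helper: derivative of `(a*x+b) * exp (c*x)`. -/
lemma hasDerivAt_affine_exp (a b c x : ℝ) :
    HasDerivAt (fun x : ℝ => (a * x + b) * Real.exp (c * x))
      ((a + (a * x + b) * c) * Real.exp (c * x)) x := by
  have h1 : HasDerivAt (fun x : ℝ => a * x + b) a x := by
    simpa using ((hasDerivAt_id x).const_mul a).add_const b
  have h2 : HasDerivAt (fun x : ℝ => Real.exp (c * x)) (Real.exp (c * x) * c) x := by
    exact ((hasDerivAt_id x).const_mul c).exp.congr_deriv (by simp)
  have := h1.mul h2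
  refine this.congr_deriv ?_
  ring

lemma tendsto_affine_exp (a b c : ℝ) (hc : c < 0) :
    Filter.Tendsto (fun x : ℝ => (a * x + b) * Real.exp (c * x)) Filter.atTop (nhds 0) := by
  have hcne : c ≠ 0 := ne_of_lt hc
  have h2 : Filter.Tendsto (fun x : ℝ => -c * x) Filter.atTop Filter.atTop :=
    Filter.Tendsto.const_mul_atTop (by linarith) Filter.tendsto_id
  have hx : Filter.Tendsto (fun x : ℝ => x * Real.exp (c * x)) Filter.atTop (nhds 0) := by
    have h1 := (Real.tendsto_pow_mul_exp_neg_atTop_nhds_zero 1).comp h2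
    have h3 := h1.const_mul (1 / (-c))
    rw [mul_zero] at h3
    refine h3.congr fun x => ?_
    simp only [Function.comp_apply, pow_one]
    rw [show -(-c * x) = c * x by ring]
    field_simp
  have he : Filter.Tendsto (fun x : ℝ => Real.exp (c * x)) Filter.atTop (nhds 0) := by
    have := Real.tendsto_exp_neg_atTop_nhds_zero.comp h2
    refine this.congr fun x => ?_
    simp only [Function.comp_apply]
    rw [show -(-c * x) = c * x by ring]
  have := (hx.const_mul a).add (he.const_mul b)
  rw [mul_zero, mul_zero, add_zero] at this
  refine this.congr fun x => ?_
  ring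

/-- the pointwise bound: for `x > 0`,
`x * e^{x/2} * log((e^x+1)/(e^x-1)) ≤ 2x e^{-x/2} + 2x e^{-5x/2} + (1+2x) e^{-9x/2}`. -/
lemma pointwise_bound {x : ℝ} (hx : 0 < x) :
    x * Real.exp (x / 2) * Real.log ((Real.exp x + 1) / (Real.exp x - 1)) ≤
      2 * x * Real.exp ((-1 / 2) * x) + 2 * x * Real.exp ((-5 / 2) * x)
        + (1 + 2 * x) * Real.exp ((-9 / 2) * x) := by
  set b : ℝ := Real.exp (-(x / 2)) with hbdef
  have hb0 : 0 < b := Real.exp_pos _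
  have hb1 : b < 1 := Real.exp_lt_one_iff.mpr (by linarith)
  have hE1 : 1 < Real.exp x := Real.one_lt_exp_iff.mpr hx
  have hEm1 : 0 < Real.exp x - 1 := by linarith
  have e1 : Real.exp ((-1 / 2) * x) = b := by rw [hbdef]; ring_nf
  have e5 : Real.exp ((-5 / 2) * x) = b ^ 5 := by
    rw [hbdef, ← Real.exp_nat_mul]; ring_nf
  have e9 : Real.exp ((-9 / 2) * x) = b ^ 9 := by
    rw [hbdef, ← Real.exp_nat_mul]; ring_nf
  have ehalf : Real.exp (x / 2) * b = 1 := by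
    rw [hbdef, ← Real.exp_add]; simp
  have hEb : Real.exp x * b ^ 2 = 1 := by
    rw [hbdef, show (Real.exp (-(x/2))) ^ 2 = Real.exp (-(x/2)) * Real.exp (-(x/2)) from sq _,
      ← Real.exp_add, ← Real.exp_add]
    rw [show x + (-(x / 2) + -(x / 2)) = 0 by ring, Real.exp_zero]
  have hb2ne : (b : ℝ) ^ 2 ≠ 0 := by positivity
  have hE : Real.exp x = (b ^ 2)⁻¹ := by
    rw [inv_eq_one_div, eq_div_iff hb2ne]; exact hEb
  have hb4 : b ^ 4 < 1 := by nlinarith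
  have h1mb4 : 0 < 1 - b ^ 4 := by linarith
  -- log y ≤ (y - y⁻¹)/2
  set y : ℝ := (Real.exp x + 1) / (Real.exp x - 1) with hydef
  have hy1 : 1 ≤ y := by
    rw [hydef, le_div_iff₀ hEm1]; linarith
  have hy0 : 0 < y := by linarith
  have hlog : Real.log y ≤ (y - y⁻¹) / 2 := by
    have h := Real.self_le_sinh_iff.mpr (Real.log_nonneg hy1)
    rwa [Real.sinh_eq, Real.exp_log hy0, Real.exp_neg, Real.exp_log hy0] at h
  -- (y - y⁻¹)/2 = 2 b² / (1 - b⁴)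
  have hyinv : y⁻¹ = (Real.exp x - 1) / (Real.exp x + 1) := by
    rw [hydef, inv_div]
  have hE2 : 0 < Real.exp x ^ 2 - 1 := by nlinarith
  have hyval : (y - y⁻¹) / 2 = 2 * b ^ 2 / (1 - b ^ 4) := by
    have step1 : (y - y⁻¹) / 2 = 2 * Real.exp x / (Real.exp x ^ 2 - 1) := by
      rw [hydef, hyinv]
      field_simp
      ring
    rw [step1, div_eq_div_iff (ne_of_gt hE2) (ne_of_gt h1mb4)]
    linear_combination (-2 * b ^ 2 - 2 * Real.exp x) * hEb
  have hlog2 : Real.log y ≤ 2 * b ^ 2 / (1 - b ^ 4) := hyval ▸ hlog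
  have hxe : 0 ≤ x * Real.exp (x / 2) := by positivity
  calc x * Real.exp (x / 2) * Real.log y
      ≤ x * Real.exp (x / 2) * (2 * b ^ 2 / (1 - b ^ 4)) := by
        exact mul_le_mul_of_nonneg_left hlog2 hxe
    _ = 2 * x * b / (1 - b ^ 4) := by
        field_simp
        linear_combination ehalf
    _ ≤ 2 * x * Real.exp ((-1 / 2) * x) + 2 * x * Real.exp ((-5 / 2) * x)
        + (1 + 2 * x) * Real.exp ((-9 / 2) * x) := by
        rw [e1, e5, e9, div_le_iff₀ h1mb4]
        have hgrow : (1 + 2 * x) * b ^ 4 ≤ 1 := by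
          have h := Real.add_one_le_exp (2 * x)
          have hb4e : Real.exp (2 * x) * b ^ 4 = 1 := by
            rw [hbdef, show (Real.exp (-(x/2))) ^ 4 = Real.exp (-(x/2)) * Real.exp (-(x/2))
              * Real.exp (-(x/2)) * Real.exp (-(x/2)) by ring, ← Real.exp_add, ← Real.exp_add,
              ← Real.exp_add, ← Real.exp_add]
            ring_nf
            simp
          nlinarith [pow_pos hb0 4]
        nlinarith [pow_pos hb0 9, mul_nonneg (pow_pos hb0 9).le (sub_nonneg.mpr hgrow)]

/-- `∫_0^∞ x·e^{x/2}·log((e^x+1)/(e^x−1)) dx` converges and is at most `9`. -/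
theorem integral_x_exp_half_log_le_nine :
    IntegrableOn
        (fun x : ℝ => x * Real.exp (x / 2) * Real.log ((Real.exp x + 1) / (Real.exp x - 1)))
        (Set.Ioi 0) ∧
    ∫ x in Set.Ioi (0 : ℝ),
        x * Real.exp (x / 2) * Real.log ((Real.exp x + 1) / (Real.exp x - 1)) ≤ 9 := by
  set f : ℝ → ℝ :=
    fun x => x * Real.exp (x / 2) * Real.log ((Real.exp x + 1) / (Real.exp x - 1)) with hfdef
  set g : ℝ → ℝ := fun x => 2 * x * Real.exp ((-1 / 2) * x) + 2 * x * Real.exp ((-5 / 2) * x)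
      + (1 + 2 * x) * Real.exp ((-9 / 2) * x) with hgdef
  set G : ℝ → ℝ := fun x => -((4 * x + 8) * Real.exp ((-1 / 2) * x))
      - (4 / 5 * x + 8 / 25) * Real.exp ((-5 / 2) * x)
      - (4 / 9 * x + 26 / 81) * Real.exp ((-9 / 2) * x) with hGdef
  have hderiv : ∀ x ∈ Set.Ici (0 : ℝ), HasDerivAt G (g x) x := by
    intro x _
    have h1 := hasDerivAt_affine_exp 4 8 (-1 / 2) x
    have h2 := hasDerivAt_affine_exp (4 / 5) (8 / 25) (-5 / 2) x
    have h3 := hasDerivAt_affine_exp (4 / 9) (26 / 81) (-9 / 2) x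
    have := (h1.neg.sub h2).sub h3
    refine this.congr_deriv ?_
    simp only [hgdef]
    ring
  have hgpos : ∀ x ∈ Set.Ioi (0 : ℝ), 0 ≤ g x := by
    intro x hx
    have hx0 : (0 : ℝ) ≤ x := (Set.mem_Ioi.mp hx).le
    have e1 := (Real.exp_pos ((-1 / 2) * x)).le
    have e5 := (Real.exp_pos ((-5 / 2) * x)).le
    have e9 := (Real.exp_pos ((-9 / 2) * x)).le
    simp only [hgdef]
    positivity
  have hGtend : Filter.Tendsto G Filter.atTop (nhds 0) := by
    have h1 := tendsto_affine_exp 4 8 (-1 / 2) (by norm_num)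
    have h2 := tendsto_affine_exp (4 / 5) (8 / 25) (-5 / 2) (by norm_num)
    have h3 := tendsto_affine_exp (4 / 9) (26 / 81) (-9 / 2) (by norm_num)
    have := (h1.neg.sub h2).sub h3
    simpa using this
  have hgint : IntegrableOn g (Set.Ioi 0) :=
    integrableOn_Ioi_deriv_of_nonneg' hderiv hgpos hGtend
  have hgval : ∫ x in Set.Ioi (0 : ℝ), g x = 0 - G 0 :=
    integral_Ioi_of_hasDerivAt_of_nonneg' hderiv hgpos hGtend
  have hG0 : G 0 = -(8 + 8 / 25 + 26 / 81) := by
    simp only [hGdef]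
    norm_num
  have hfg : ∀ x ∈ Set.Ioi (0 : ℝ), f x ≤ g x := fun x hx => pointwise_bound hx
  have hf0 : ∀ x ∈ Set.Ioi (0 : ℝ), 0 ≤ f x := by
    intro x hx
    have hx0 : (0 : ℝ) < x := hx
    have hE1 : 1 < Real.exp x := Real.one_lt_exp_iff.mpr hx0
    have hEm1 : 0 < Real.exp x - 1 := by linarith
    have hy1 : 1 ≤ (Real.exp x + 1) / (Real.exp x - 1) := by
      rw [le_div_iff₀ hEm1]; linarith
    have := Real.log_nonneg hy1
    simp only [hfdef]
    positivity
  have hfmeas : AEStronglyMeasurable f (volume.restrict (Set.Ioi 0)) := by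
    apply Measurable.aestronglyMeasurable
    apply Measurable.mul
    · exact (measurable_id.mul (Real.measurable_exp.comp (measurable_id.div_const 2)))
    · exact Real.measurable_log.comp
        ((Real.measurable_exp.add_const 1).div (Real.measurable_exp.sub_const 1))
  have hfint : IntegrableOn f (Set.Ioi 0) := by
    refine MeasureTheory.Integrable.mono hgint hfmeas ?_
    rw [ae_restrict_iff' measurableSet_Ioi]
    refine Filter.Eventually.of_forall fun x hx => ?_
    rw [Real.norm_eq_abs, Real.norm_eq_abs, abs_of_nonneg (hf0 x hx),
      abs_of_nonneg (hgpos x hx)]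
    exact hfg x hx
  refine ⟨hfint, ?_⟩
  calc ∫ x in Set.Ioi (0 : ℝ), f x ≤ ∫ x in Set.Ioi (0 : ℝ), g x :=
        setIntegral_mono_on hfint hgint measurableSet_Ioi hfg
    _ = 0 - G 0 := hgval
    _ ≤ 9 := by rw [hG0]; norm_num
end

section
/- Let ρ₁, …, ρ_m be positive reals, and for each index x in a finite set let w_{j,x} ≥ 0 (j = 1,…,m) and ρ_x ≥ 0 with ∑_x ρ_x ∏_{j}(w_{j,x}+1) > 0. Suppose w_{j,x} ≤ W_j for all x, where W_j ≥ 0. Then (∑_x ρ_x ∏_{j=1}^m w_{j,x}) / (∑_x ρ_x ∏_{j=1}^m (w_{j,x} + 1)) ≤ ∏_{j=1}^m W_j/(W_j + 1). -/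
/-- Scalar weighted-average ratio bound: if `0 ≤ w_{j,x} ≤ W_j` and `ρ_x ≥ 0` with positive
denominator, then
`(∑_x ρ_x ∏_j w_{j,x}) / (∑_x ρ_x ∏_j (w_{j,x}+1)) ≤ ∏_j W_j/(W_j+1)`. -/
theorem weighted_ratio_bound {m NX : ℕ} (ρ : Fin NX → ℝ) (w : Fin m → Fin NX → ℝ)
    (W : Fin m → ℝ) (hρ : ∀ x, 0 ≤ ρ x) (hw : ∀ j x, 0 ≤ w j x)
    (hW : ∀ j, 0 ≤ W j) (hwW : ∀ j x, w j x ≤ W j)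
    (hden : 0 < ∑ x, ρ x * ∏ j, (w j x + 1)) :
    (∑ x, ρ x * ∏ j, w j x) / (∑ x, ρ x * ∏ j, (w j x + 1)) ≤
      ∏ j, W j / (W j + 1) := by
  rw [div_le_iff₀ hden]
  rw [Finset.mul_sum]
  apply Finset.sum_le_sum
  intro x _
  have h1 : ∏ j, w j x ≤ ∏ j, (W j / (W j + 1) * (w j x + 1)) := by
    apply Finset.prod_le_prod (fun j _ => hw j x)
    intro j _
    have hW1 : (0:ℝ) < W j + 1 := by linarith [hW j]
    rw [div_mul_eq_mul_div, le_div_iff₀ hW1]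
    nlinarith [hwW j x, hw j x, hW j]
  calc ρ x * ∏ j, w j x ≤ ρ x * ∏ j, (W j / (W j + 1) * (w j x + 1)) :=
        mul_le_mul_of_nonneg_left h1 (hρ x)
    _ = (∏ j, W j / (W j + 1)) * (ρ x * ∏ j, (w j x + 1)) := by
        rw [Finset.prod_mul_distrib]; ring
end
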